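/- arXiv:2404.08776 — 7 statements merged into one kernel-verified Lean document; each statement's English description precedes it below -/
import Mathlib

section
/- Every set S of vertices of the graph B whose closed neighborhood N[S] contains all vertices of B except possibly a and b has at least 3 elements; that is, even when a and b are predominated, at least three vertices are needed to dominate B. -/
namespace CDG

/-- Vertices of the graph `B`. -/
inductive BVert : Type
  | a | e | b | b' | h | k | f1 | g1 | f2 | g2

/-- The edges of the graph `B`. -/
def BRel : BVert → BVert → Prop
  | .a, .e => True
  | .e, .b => True
  | .b, .b' => True
  | .a, .h => True
  | .h, .e => True
  | .e, .f1 => True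
  | .f1, .b => True
  | .b, .f2 => True
  | .f2, .e => True
  | .e, .g1 => True
  | .g1, .f1 => True
  | .e, .g2 => True
  | .g2, .f2 => True
  | .h, .k => True
  | .k, .a => True
  | _, _ => False

/-- The graph `B`. -/
def graphB : SimpleGraph BVert := SimpleGraph.fromRel BRel

/-- `S` is a connected dominating set of `G`: every vertex is in `S` or adjacent to a
vertex of `S`, and the subgraph induced by `S` is connected. -/
def IsConnDomSet {V : Type*} (G : SimpleGraph V) (S : Set V) : Prop :=
  (∀ v : V, v ∈ S ∨ ∃ u ∈ S, G.Adj u v) ∧ (G.induce S).Connected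

/-- The connected domination number of `G`. -/
noncomputable def connDomNum {V : Type*} (G : SimpleGraph V) : ℕ :=
  sInf {m | ∃ S : Set V, IsConnDomSet G S ∧ S.ncard = m}

/-- Vertices of the graph `H n`: `u i` is `u_i` for `0 ≤ i ≤ n+1`, `x t` is `x_{t+1}` and
`y t` is `y_{t+1}` for `0 ≤ t ≤ n-2`. -/
inductive HVert (n : ℕ) : Type
  | u : Fin (n + 2) → HVert n
  | x : Fin (n - 1) → HVert n
  | y : Fin (n - 1) → HVert n

/-- The edges of the graph `H n`. -/
def HRel (n : ℕ) : HVert n → HVert n → Prop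
  | .u i, .u j => (j : ℕ) = (i : ℕ) + 1
  | .u i, .x t => (i : ℕ) = (t : ℕ) + 1 ∨ (i : ℕ) = (t : ℕ) + 2
  | .x t, .y s => t = s
  | .y s, .u i => (i : ℕ) = (s : ℕ) + 2
  | _, _ => False

/-- The graph `H n`. -/
def graphH (n : ℕ) : SimpleGraph (HVert n) := SimpleGraph.fromRel (HRel n)

/-- Vertices of the graph `C m`: `cc i` is `c^{i+1}` and `dd i` is `d^{i+1}` for `0 ≤ i ≤ m-1`. -/
inductive CVert (m : ℕ) : Type
  | c : CVert m
  | d : CVert m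
  | cc : Fin m → CVert m
  | dd : Fin m → CVert m

/-- The edges of the graph `C m`. -/
def CRel (m : ℕ) : CVert m → CVert m → Prop
  | .c, .d => True
  | .c, .dd _ => True
  | .cc i, .dd j => i = j
  | _, _ => False

/-- The graph `C m`. -/
def graphC (m : ℕ) : SimpleGraph (CVert m) := SimpleGraph.fromRel (CRel m)

/-- Vertices of the graph `A`. -/
inductive AVert : Type
  | p1 | p2 | p3 | q1 | q2 | r1 | r2

/-- The edges of the graph `A`. -/
def ARel : AVert → AVert → Prop
  | .p1, .p2 => True
  | .p2, .p3 => True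
  | .p1, .q1 => True
  | .q1, .r1 => True
  | .p2, .q1 => True
  | .p2, .r1 => True
  | .p2, .q2 => True
  | .q2, .r2 => True
  | .p3, .q2 => True
  | .p3, .r2 => True
  | _, _ => False

/-- Vertices of the graph `G_F`, for a formula with `k` variables and `n` clauses:
`k` copies of `B`, `n` copies of `C n`, one copy of `H (2n+7)`, and a copy of `A`
exactly when `k` is odd (realized as `AVert × Fin (k % 2)`). -/
abbrev GVert (k n : ℕ) : Type :=
  (Fin k × BVert) ⊕ (Fin n × CVert n) ⊕ HVert (2 * n + 7) ⊕ (AVert × Fin (k % 2))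

/-- The edges of the graph `G_F`, where the formula `F` assigns to each clause `j`
the (nonempty) set of variables appearing in it. -/
def GRel (k n : ℕ) (F : Fin n → Finset (Fin k)) : GVert k n → GVert k n → Prop
  | .inl (i, v), .inl (i', w) => i = i' ∧ BRel v w
  | .inr (.inl (j, v)), .inr (.inl (j', w)) => j = j' ∧ CRel n v w
  | .inr (.inr (.inl v)), .inr (.inr (.inl w)) => HRel (2 * n + 7) v w
  | .inr (.inr (.inr (v, _))), .inr (.inr (.inr (w, _))) => ARel v w
  | .inr (.inl (j, v)), .inl (i, w) =>
      i ∈ F j ∧ w = .a ∧ (v = .c ∨ ∃ t, v = .cc t)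
  | .inr (.inr (.inl v)), .inl (i, w) =>
      v = .u ⟨0, by omega⟩ ∧ (w = .a ∨ w = .b)
  | .inr (.inr (.inr (v, _))), .inr (.inr (.inl w)) =>
      v = .p1 ∧ w = .u ⟨0, by omega⟩
  | _, _ => False

/-- The graph `G_F`. -/
def graphGF (k n : ℕ) (F : Fin n → Finset (Fin k)) : SimpleGraph (GVert k n) :=
  SimpleGraph.fromRel (GRel k n F)

/-- Vertices of the graph `G'_F`, for a formula with `k` variables and `n` clauses:
`k` copies of `B`, `n` copies of `C n`, one copy of `H 6`, and a copy of `A`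
exactly when `k` is odd (realized as `AVert × Fin (k % 2)`). -/
abbrev GVert' (k n : ℕ) : Type :=
  (Fin k × BVert) ⊕ (Fin n × CVert n) ⊕ HVert 6 ⊕ (AVert × Fin (k % 2))

/-- The edges of the graph `G'_F`. -/
def GRel' (k n : ℕ) (F : Fin n → Finset (Fin k)) : GVert' k n → GVert' k n → Prop
  | .inl (i, v), .inl (i', w) => i = i' ∧ BRel v w
  | .inr (.inl (j, v)), .inr (.inl (j', w)) => j = j' ∧ CRel n v w
  | .inr (.inr (.inl v)), .inr (.inr (.inl w)) => HRel 6 v w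
  | .inr (.inr (.inr (v, _))), .inr (.inr (.inr (w, _))) => ARel v w
  | .inr (.inl (j, v)), .inl (i, w) =>
      i ∈ F j ∧ w = .a ∧ (v = .c ∨ ∃ t, v = .cc t)
  | .inr (.inr (.inl v)), .inl (i, w) =>
      v = .u ⟨7, by omega⟩ ∧ (w = .a ∨ w = .b)
  | .inr (.inr (.inr (v, _))), .inr (.inr (.inl w)) =>
      v = .p1 ∧ w = .u ⟨7, by omega⟩
  | _, _ => False

/-- The graph `G'_F`. -/
def graphGF' (k n : ℕ) (F : Fin n → Finset (Fin k)) : SimpleGraph (GVert' k n) :=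
  SimpleGraph.fromRel (GRel' k n F)

end CDG

/-! The vertices `b'`, `k`, `g1` must be dominated, and their closed neighborhoods
`{b, b'}`, `{a, h, k}`, `{e, f1, g1}` are pairwise disjoint, so they need three distinct
dominators. -/

open Function

namespace SimpleGraph

variable {V : Type*} (G : SimpleGraph V)

def closedNbhd (v : V) : Set V := insert v (G.neighborSet v)

variable {G}

theorem mem_closedNbhd {u v : V} : u ∈ G.closedNbhd v ↔ u = v ∨ G.Adj v u := Iff.rfl

theorem ncard_le_ncard_of_dominates_pairwise_disjoint_closedNbhd {S W : Set V} (hS : S.Finite)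
    (hW : W.Pairwise (Disjoint on G.closedNbhd))
    (hdom : ∀ w ∈ W, w ∈ S ∨ ∃ u ∈ S, G.Adj u w) : W.ncard ≤ S.ncard := by
  have hmeet : ∀ w ∈ W, ∃ u ∈ S, u ∈ G.closedNbhd w := fun w hw ↦ by
    rcases hdom w hw with hwS | ⟨u, hu, huw⟩
    exacts [⟨w, hwS, mem_closedNbhd.2 (.inl rfl)⟩, ⟨u, hu, mem_closedNbhd.2 (.inr huw.symm)⟩]
  choose! dominator hdominator_mem hdominator_nbhd using hmeet
  refine Set.ncard_le_ncard_of_injOn dominator hdominator_mem (fun v hv w hw hvw ↦ ?_) hS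
  by_contra hne
  exact Set.disjoint_left.1 (hW hv hw hne) (hdominator_nbhd v hv) (hvw ▸ hdominator_nbhd w hw)

end SimpleGraph

namespace CDG

instance : Finite BVert := by
  refine Finite.of_surjective
    (![.a, .e, .b, .b', .h, .k, .f1, .g1, .f2, .g2] : Fin 10 → BVert) fun v ↦ ?_
  cases v <;> simp [Fin.exists_fin_succ]

theorem graphB_closedNbhd_b' : graphB.closedNbhd .b' = {.b', .b} := by
  ext u; cases u <;> simp [SimpleGraph.mem_closedNbhd, graphB, BRel]

theorem graphB_closedNbhd_k : graphB.closedNbhd .k = {.k, .h, .a} := by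
  ext u; cases u <;> simp [SimpleGraph.mem_closedNbhd, graphB, BRel]

theorem graphB_closedNbhd_g1 : graphB.closedNbhd .g1 = {.g1, .e, .f1} := by
  ext u; cases u <;> simp [SimpleGraph.mem_closedNbhd, graphB, BRel]

theorem graphB_pairwise_disjoint_closedNbhd :
    ({.b', .k, .g1} : Set BVert).Pairwise (Disjoint on graphB.closedNbhd) := by
  simp [Set.pairwise_insert, onFun, graphB_closedNbhd_b', graphB_closedNbhd_k,
    graphB_closedNbhd_g1]

theorem graphB_predominated_three_needed (S : Set BVert)
    (hdom : ∀ v : BVert, v ≠ .a → v ≠ .b → (v ∈ S ∨ ∃ u ∈ S, graphB.Adj u v)) :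
    3 ≤ S.ncard := by
  have hdominated : ∀ w ∈ ({.b', .k, .g1} : Set BVert), w ∈ S ∨ ∃ u ∈ S, graphB.Adj u w := by
    rintro w (rfl | rfl | rfl) <;> exact hdom _ (by simp) (by simp)
  calc 3 = ({.b', .k, .g1} : Set BVert).ncard := by simp [Set.ncard_insert_of_notMem]
    _ ≤ S.ncard := SimpleGraph.ncard_le_ncard_of_dominates_pairwise_disjoint_closedNbhd
        S.toFinite graphB_pairwise_disjoint_closedNbhd hdominated

end CDG
end

section
/- For every n ≥ 2, the connected domination number of the graph H_n equals n, i.e., γ_c(H_n) = n. -/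
/-!
The vertices `u_1, …, u_n` form a path that dominates `H_n`: `u_0` and `u_{n+1}` hang off its
ends, and `x_i`, `y_i` are adjacent to `u_i`, `u_{i+1}`. Conversely, the closed neighbourhoods
`N[u_0] = {u_0, u_1}` and `N[y_i] = {x_i, y_i, u_{i+1}}` (`1 ≤ i ≤ n - 1`) are pairwise disjoint,
and every dominating set meets each of them, so already a dominating set has at least `n`
vertices.
-/

open Function

namespace SimpleGraph

variable {V : Type*} (G : SimpleGraph V)

def closedNeighborSet (v : V) : Set V := insert v (G.neighborSet v)

variable {G}

theorem card_le_ncard_of_dominating {ι : Type*} {S : Set V} (hS : S.Finite)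
    (hdom : ∀ v, v ∈ S ∨ ∃ u ∈ S, G.Adj u v) (p : ι → V)
    (hp : Pairwise (Disjoint on fun i => G.closedNeighborSet (p i))) :
    Nat.card ι ≤ S.ncard := by
  have hmeet : ∀ i, ∃ d ∈ S, d ∈ G.closedNeighborSet (p i) := fun i => by
    rcases hdom (p i) with hpi | ⟨u, huS, hadj⟩
    · exact ⟨p i, hpi, Set.mem_insert _ _⟩
    · exact ⟨u, huS, Set.mem_insert_of_mem _ hadj.symm⟩
  choose d hdS hdN using hmeet
  have hinj : Injective fun i => (⟨d i, hdS i⟩ : S) := by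
    intro i j hij
    have hdij : d i = d j := congrArg Subtype.val hij
    by_contra hne
    exact Set.disjoint_left.mp (hp hne) (hdN i) (hdij ▸ hdN j)
  have := hS.to_subtype
  rw [← Nat.card_coe_set_eq]
  exact Nat.card_le_card_of_injective _ hinj

theorem connected_induce_range {W : Type*} {H : SimpleGraph W} (hH : H.Connected) (f : H →g G) :
    (G.induce (Set.range f)).Connected :=
  hH.map ⟨fun w => ⟨f w, w, rfl⟩, f.map_rel⟩ (by rintro ⟨_, w, rfl⟩; exact ⟨w, rfl⟩)

end SimpleGraph

namespace CDG

theorem connDomNum_eq {V : Type*} {G : SimpleGraph V} {S : Set V} (hS : IsConnDomSet G S)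
    (hmin : ∀ T, IsConnDomSet G T → S.ncard ≤ T.ncard) : connDomNum G = S.ncard :=
  le_antisymm (Nat.sInf_le ⟨S, hS, rfl⟩)
    (le_csInf ⟨_, S, hS, rfl⟩ fun _ ⟨T, hT, hm⟩ => hm ▸ hmin T hT)

instance (n : ℕ) : Finite (HVert n) :=
  Finite.of_injective (β := Fin (n + 2) ⊕ Fin (n - 1) ⊕ Fin (n - 1))
    (fun | .u i => .inl i | .x t => .inr (.inl t) | .y t => .inr (.inr t))
    (by rintro (_ | _ | _) (_ | _ | _) h <;> simp_all)

theorem graphH_adj_u_u {n : ℕ} {i j : Fin (n + 2)} :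
    (graphH n).Adj (.u i) (.u j) ↔ (j : ℕ) = i + 1 ∨ (i : ℕ) = j + 1 := by
  simp only [graphH, SimpleGraph.fromRel_adj, HRel, ne_eq, HVert.u.injEq, Fin.ext_iff]
  omega

def spine (n : ℕ) : Fin n → HVert n := fun j => .u ⟨j + 1, by omega⟩

theorem spine_injective (n : ℕ) : Injective (spine n) := by
  intro i j h
  simp only [spine, HVert.u.injEq, Fin.mk.injEq, add_left_inj] at h
  exact Fin.ext h

theorem isConnDomSet_spine {n : ℕ} (hn : 0 < n) :
    IsConnDomSet (graphH n) (Set.range (spine n)) := by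
  have hdom : ∀ j v, (graphH n).Adj (spine n j) v →
      ∃ u ∈ Set.range (spine n), (graphH n).Adj u v :=
    fun j _ h => ⟨_, ⟨j, rfl⟩, h⟩
  refine ⟨?_, ?_⟩
  · rintro (⟨i, hi⟩ | ⟨t, ht⟩ | ⟨t, ht⟩)
    · by_cases h0 : i = 0
      · exact .inr (hdom ⟨0, hn⟩ _ (by simp [spine, graphH_adj_u_u, h0]))
      by_cases hlast : i = n + 1
      · refine .inr (hdom ⟨n - 1, by omega⟩ _ ?_)
        simp only [spine, graphH_adj_u_u]
        omega
      exact .inl ⟨⟨i - 1, by omega⟩, by simp only [spine, HVert.u.injEq, Fin.mk.injEq]; omega⟩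
    · exact .inr (hdom ⟨t, by omega⟩ _ (by simp [spine, graphH, HRel]))
    · exact .inr (hdom ⟨t + 1, by omega⟩ _ (by simp [spine, graphH, HRel]))
  · obtain ⟨m, rfl⟩ := Nat.exists_eq_succ_of_ne_zero hn.ne'
    refine SimpleGraph.connected_induce_range (SimpleGraph.pathGraph_connected m) ⟨spine _, ?_⟩
    intro a b hab
    rw [SimpleGraph.pathGraph_adj] at hab
    simp only [spine, graphH_adj_u_u]
    omega

theorem ncard_range_spine (n : ℕ) : (Set.range (spine n)).ncard = n := by
  rw [Set.ncard_range_of_injective (spine_injective n), Nat.card_fin]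

def packing (n : ℕ) : Option (Fin (n - 1)) → HVert n
  | none => .u 0
  | some t => .y t

theorem pairwise_disjoint_closedNeighborSet_packing (n : ℕ) :
    Pairwise (Disjoint on fun i => (graphH n).closedNeighborSet (packing n i)) := by
  rintro (_ | i) (_ | j) hij <;> rw [onFun, Set.disjoint_left] <;>
    rintro (v | v | v) hvi hvj <;> simp_all [SimpleGraph.closedNeighborSet, packing, graphH, HRel]
  exact hij (Fin.ext hvj)

theorem le_ncard_of_dominating_graphH {n : ℕ} {T : Set (HVert n)}
    (hdom : ∀ v, v ∈ T ∨ ∃ u ∈ T, (graphH n).Adj u v) : n ≤ T.ncard := by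
  have := SimpleGraph.card_le_ncard_of_dominating T.toFinite hdom (packing n)
    (pairwise_disjoint_closedNeighborSet_packing n)
  rw [Finite.card_option, Nat.card_fin] at this
  omega

theorem connDomNum_graphH (n : ℕ) (hn : 2 ≤ n) : connDomNum (graphH n) = n := by
  calc connDomNum (graphH n) = (Set.range (spine n)).ncard :=
        connDomNum_eq (isConnDomSet_spine (by omega)) fun T hT =>
          (ncard_range_spine n).symm ▸ le_ncard_of_dominating_graphH hT.1
    _ = n := ncard_range_spine n

end CDG
end

section
/- For every n ≥ 2, the set {u_1, u_2, ..., u_n} is the unique connected dominating set of the graph H_n of size n; that is, any connected dominating set of H_n with exactly n elements equals {u_1, ..., u_n}. -/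
namespace CDG

/-- The set `{u_1, ..., u_n}` in the graph `H n`. -/
def Hu (n : ℕ) : Set (HVert n) :=
  {v | ∃ i : Fin (n + 2), 1 ≤ (i : ℕ) ∧ (i : ℕ) ≤ n ∧ v = .u i}

instance inst_s4 (n : ℕ) : Finite (HVert n) := by
  have h : Function.Surjective (fun z : Fin (n+2) ⊕ Fin (n-1) ⊕ Fin (n-1) =>
      match z with
      | .inl i => HVert.u i
      | .inr (.inl t) => HVert.x t
      | .inr (.inr t) => HVert.y t) := by
    rintro (i | t | t)
    exacts [⟨.inl i, rfl⟩, ⟨.inr (.inl t), rfl⟩, ⟨.inr (.inr t), rfl⟩]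
  exact Finite.of_surjective _ h

def blk {n : ℕ} : HVert n → ℕ
  | .u i => (i : ℕ) - 1
  | .x t => (t : ℕ) + 1
  | .y t => (t : ℕ) + 1

def uval {n : ℕ} : HVert n → ℕ
  | .u i => (i : ℕ)
  | .x _ => n + 5
  | .y _ => n + 5

def leftv {n : ℕ} (c : ℕ) : HVert n → Prop
  | .u i => (i : ℕ) < c
  | .x t => (t : ℕ) + 1 < c
  | .y t => (t : ℕ) + 1 < c

lemma cut_step {n : ℕ} (c : ℕ) {v w : HVert n} (h : (graphH n).Adj v w)
    (hv : uval v ≠ c) (hw : uval w ≠ c) : (leftv c v ↔ leftv c w) := by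
  rw [graphH, SimpleGraph.fromRel_adj] at h
  obtain ⟨-, h⟩ := h
  rcases v with i | t | t <;> rcases w with j | s | s <;>
    simp only [HRel, uval, leftv, false_or, or_false, Fin.ext_iff] at * <;> omega

lemma walk_leftv {n : ℕ} {S : Set (HVert n)} (c : ℕ)
    (hno : ∀ a ∈ S, uval a ≠ c) :
    ∀ {p q : ↥S}, (((graphH n).induce S).Walk p q) → (leftv c p.1 ↔ leftv c q.1) := by
  intro p q w
  induction w with
  | nil => exact Iff.rfl
  | @cons a b cc h _ ih =>
      have hadj : (graphH n).Adj a.1 b.1 := h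
      exact (cut_step c hadj (hno _ a.2) (hno _ b.2)).trans ih

lemma blk_adj_y {n : ℕ} {s : Fin (n-1)} {w : HVert n}
    (h : (graphH n).Adj w (.y s)) : blk w = (s : ℕ) + 1 := by
  rw [graphH, SimpleGraph.fromRel_adj] at h
  obtain ⟨-, h⟩ := h
  rcases w with i | t | t <;> simp only [HRel, blk, false_or, or_false, Fin.ext_iff, Fin.val_mk] at * <;> omega

lemma blk_adj_u0 {n : ℕ} {w : HVert n}
    (h : (graphH n).Adj w (.u ⟨0, by omega⟩)) : blk w = 0 := by
  rw [graphH, SimpleGraph.fromRel_adj] at h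
  obtain ⟨-, h⟩ := h
  rcases w with i | t | t <;> simp only [HRel, blk, false_or, or_false, Fin.ext_iff, Fin.val_mk] at * <;> omega

lemma adj_ulast {n : ℕ} {w : HVert n}
    (h : (graphH n).Adj w (.u ⟨n+1, by omega⟩)) : w = .u ⟨n, by omega⟩ := by
  rw [graphH, SimpleGraph.fromRel_adj] at h
  obtain ⟨-, h⟩ := h
  rcases w with i | t | t <;> simp only [HRel, false_or, or_false, Fin.ext_iff, Fin.val_mk] at *
  · have := i.isLt
    have : (i : ℕ) = n := by omega
    exact congrArg HVert.u (Fin.ext this)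
  · have := t.isLt; omega
  · have := t.isLt; omega

theorem graphH_unique_min_connDomSet (n : ℕ) (hn : 2 ≤ n) (S : Set (HVert n))
    (hS : IsConnDomSet (graphH n) S) (hcard : S.ncard = n) :
    S = Hu n := by
  classical
  obtain ⟨hdom, hconn⟩ := hS
  have hSfin : S.Finite := Set.toFinite S
  -- one S-element in each block
  have hex : ∀ b : Fin n, ∃ v ∈ S, blk v = (b : ℕ) := by
    rintro ⟨b, hb⟩
    show ∃ v ∈ S, blk v = b
    rcases Nat.eq_zero_or_pos b with hb0 | hb1
    · rcases hdom (.u ⟨0, by omega⟩) with h | ⟨w, hw, hadj⟩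
      · exact ⟨_, h, by simp [blk, hb0]⟩
      · exact ⟨w, hw, by rw [blk_adj_u0 hadj]; omega⟩
    · have hs : b - 1 < n - 1 := by omega
      rcases hdom (.y ⟨b-1, hs⟩) with h | ⟨w, hw, hadj⟩
      · refine ⟨_, h, ?_⟩
        show (b - 1) + 1 = b
        omega
      · refine ⟨w, hw, ?_⟩
        rw [blk_adj_y hadj]
        show (b - 1) + 1 = b
        omega
  choose g hgS hgblk using hex
  have hginj : Function.Injective g := by
    intro a b h
    have h2 := hgblk a
    rw [h, hgblk b] at h2
    exact Fin.ext h2.symm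
  have hrange : Set.range g = S := by
    apply Set.eq_of_subset_of_ncard_le (Set.range_subset_iff.2 hgS)
    · rw [hcard]
      have h1 : Nat.card ↑(Set.range g) = Nat.card (Fin n) := Nat.card_range_of_injective hginj
      rw [Nat.card_coe_set_eq, Nat.card_eq_fintype_card, Fintype.card_fin] at h1
      omega
  have huniq : ∀ v ∈ S, ∀ w ∈ S, blk v = blk w → v = w := by
    intro v hv w hw h
    rw [← hrange] at hv hw
    obtain ⟨a, rfl⟩ := hv
    obtain ⟨b, rfl⟩ := hw
    rw [hgblk a, hgblk b] at h
    rw [Fin.ext h]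
  have hblkS : ∀ v ∈ S, blk v < n := by
    intro v hv
    rw [← hrange] at hv
    obtain ⟨a, rfl⟩ := hv
    rw [hgblk]; exact a.2
  -- every vertex of S has a neighbor in S
  have hnbr : ∀ v ∈ S, ∃ w ∈ S, (graphH n).Adj v w := by
    intro v hv
    obtain ⟨w, hw, hne⟩ := Set.exists_ne_of_one_lt_ncard (by omega : 1 < S.ncard) v
    obtain ⟨p⟩ := hconn.preconnected ⟨v, hv⟩ ⟨w, hw⟩
    cases p with
    | nil => exact absurd rfl hne
    | cons h _ =>
        rename_i b _
        exact ⟨b.1, b.2, h⟩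
  -- u_{n+1} ∉ S, hence u_n ∈ S
  have hun1 : (HVert.u ⟨n+1, by omega⟩ : HVert n) ∉ S := by
    intro h
    have := hblkS _ h
    simp [blk] at this
  have hun : (HVert.u ⟨n, by omega⟩ : HVert n) ∈ S := by
    rcases hdom (.u ⟨n+1, by omega⟩) with h | ⟨w, hw, hadj⟩
    · exact absurd h hun1
    · rwa [adj_ulast hadj] at hw
  -- descending induction
  have key : ∀ d b (h1 : 1 ≤ b) (h2 : b + d = n - 1), (HVert.u ⟨b+1, by omega⟩ : HVert n) ∈ S := by
    intro d
    induction d with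
    | zero =>
        intro b hb1 hbd
        have e : (⟨b+1, by omega⟩ : Fin (n+2)) = ⟨n, by omega⟩ := Fin.ext (by simp; omega)
        rw [e]; exact hun
    | succ d ih =>
        intro b hb1 hbd
        have hb2 : (HVert.u ⟨b+2, by omega⟩ : HVert n) ∈ S := by
          have e : (⟨b+2, by omega⟩ : Fin (n+2)) = ⟨(b+1)+1, by omega⟩ := Fin.ext (by simp)
          rw [e]; exact ih (b+1) (by omega) (by omega)
        obtain ⟨v, hv, hblkv⟩ : ∃ v ∈ S, blk v = b := ⟨g ⟨b, by omega⟩, hgS _, hgblk _⟩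
        rcases v with i | t | t
        · have hi : (i : ℕ) = b + 1 := by simp [blk] at hblkv; omega
          have e : (⟨b+1, by omega⟩ : Fin (n+2)) = i := Fin.ext (by simp; omega)
          rwa [e]
        · -- x-case : cut argument
          exfalso
          have ht : (t : ℕ) + 1 = b := by simpa [blk] using hblkv
          have hnotu : (HVert.u ⟨b+1, by omega⟩ : HVert n) ∉ S := by
            intro h
            have := huniq _ h _ hv (by simp [blk]; omega)
            simp at this
          have hcut : ∀ a ∈ S, uval a ≠ b + 1 := by
            intro a ha hne
            rcases a with i | s | s <;> simp only [uval] at hne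
            · apply hnotu
              have e : (⟨b+1, by omega⟩ : Fin (n+2)) = i := Fin.ext (by simp; omega)
              rwa [e]
            · omega
            · omega
          obtain ⟨p⟩ := hconn.preconnected ⟨_, hv⟩ ⟨_, hb2⟩
          have := walk_leftv (b+1) hcut p
          simp only [leftv] at this
          omega
        · -- y-case : isolated
          exfalso
          obtain ⟨w, hw, hadj⟩ := hnbr _ hv
          have hbw : blk w = (t : ℕ) + 1 := blk_adj_y hadj.symm
          have : w = HVert.y t := huniq _ hw _ hv (by rw [hbw]; rfl)
          rw [this] at hadj
          exact (graphH n).irrefl hadj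
  -- block 0 is u_1
  have hu1 : (HVert.u ⟨1, by omega⟩ : HVert n) ∈ S := by
    obtain ⟨v, hv, hblkv⟩ : ∃ v ∈ S, blk v = 0 := ⟨g ⟨0, by omega⟩, hgS _, hgblk _⟩
    rcases v with i | t | t
    · have hi : (i : ℕ) ≤ 1 := by simp [blk] at hblkv; omega
      rcases Nat.eq_zero_or_pos i with h0 | h1
      · exfalso
        obtain ⟨w, hw, hadj⟩ := hnbr _ hv
        have e : HVert.u i = (HVert.u ⟨0, by omega⟩ : HVert n) := by
          exact congrArg _ (Fin.ext (by simp [h0]))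
        rw [e] at hadj hv
        have hbw : blk w = 0 := blk_adj_u0 hadj.symm
        have : w = HVert.u ⟨0, by omega⟩ := huniq _ hw _ hv (by rw [hbw]; rfl)
        rw [this] at hadj
        exact (graphH n).irrefl hadj
      · have e : (⟨1, by omega⟩ : Fin (n+2)) = i := Fin.ext (by simp; omega)
        rwa [e]
    · simp [blk] at hblkv
    · simp [blk] at hblkv
  -- every block element is the right u
  have hgval : ∀ b : Fin n, g b = HVert.u ⟨(b : ℕ) + 1, by omega⟩ := by
    intro b
    have hmem : (HVert.u ⟨(b : ℕ)+1, by omega⟩ : HVert n) ∈ S := by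
      rcases Nat.eq_zero_or_pos (b : ℕ) with h0 | h1
      · have e : (⟨(b:ℕ)+1, by omega⟩ : Fin (n+2)) = ⟨1, by omega⟩ := Fin.ext (by simp [h0])
        rw [e]; exact hu1
      · exact key (n - 1 - (b : ℕ)) (b : ℕ) h1 (by omega)
    exact huniq _ (hgS b) _ hmem (by rw [hgblk]; simp [blk])
  ext v
  constructor
  · intro hv
    rw [← hrange] at hv
    obtain ⟨b, rfl⟩ := hv
    rw [hgval b]
    exact ⟨⟨(b : ℕ)+1, by omega⟩, by show 1 ≤ (b:ℕ)+1; omega, by show (b:ℕ)+1 ≤ n; have := b.isLt; omega, rfl⟩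
  · rintro ⟨i, hi1, hi2, rfl⟩
    have e : HVert.u i = g ⟨(i : ℕ) - 1, by omega⟩ := by
      rw [hgval]
      exact congrArg _ (Fin.ext (by simp; omega))
    rw [e]; exact hgS _

end CDG
end

section
/- Let F be a positive CNF formula with k variables and n ≥ 1 clauses (each clause a nonempty subset of the variables), where k is even and k ≥ 1. Then the set D = {u_0, u_1, ..., u_{2n+7}} ∪ ⋃_{i∈[k]} {a_i, e_i, b_i} ∪ {c_1, ..., c_n} is a connected dominating set of G_F of size 3k + 3n + 8. -/
namespace CDG

/-- The set `{u_0, ..., u_{2n+7}} ∪ ⋃_i {a_i, e_i, b_i} ∪ {c_1, ..., c_n}` in `G_F`. -/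
def Dset (k n : ℕ) : Set (GVert k n) :=
  {v | ∃ i : Fin (2 * n + 7 + 2), (i : ℕ) ≤ 2 * n + 7 ∧ v = .inr (.inr (.inl (.u i)))} ∪
  {v | ∃ i : Fin k, v = .inl (i, .a) ∨ v = .inl (i, .e) ∨ v = .inl (i, .b)} ∪
  {v | ∃ j : Fin n, v = .inr (.inl (j, .c))}

section Aux

variable {k n : ℕ} {F : Fin n → Finset (Fin k)}

lemma gadj (F : Fin n → Finset (Fin k)) {v w : GVert k n} (hne : v ≠ w)
    (h : GRel k n F v w ∨ GRel k n F w v) : (graphGF k n F).Adj v w := by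
  rw [graphGF, SimpleGraph.fromRel_adj]; exact ⟨hne, h⟩

lemma memU (i : Fin (2 * n + 7 + 2)) (h : (i : ℕ) ≤ 2 * n + 7) :
    (Sum.inr (Sum.inr (Sum.inl (HVert.u i))) : GVert k n) ∈ Dset k n :=
  Or.inl (Or.inl ⟨i, h, rfl⟩)

lemma memA (i : Fin k) : (Sum.inl (i, BVert.a) : GVert k n) ∈ Dset k n :=
  Or.inl (Or.inr ⟨i, Or.inl rfl⟩)

lemma memE (i : Fin k) : (Sum.inl (i, BVert.e) : GVert k n) ∈ Dset k n :=
  Or.inl (Or.inr ⟨i, Or.inr (Or.inl rfl)⟩)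

lemma memB (i : Fin k) : (Sum.inl (i, BVert.b) : GVert k n) ∈ Dset k n :=
  Or.inl (Or.inr ⟨i, Or.inr (Or.inr rfl)⟩)

lemma memC (j : Fin n) : (Sum.inr (Sum.inl (j, CVert.c)) : GVert k n) ∈ Dset k n :=
  Or.inr ⟨j, rfl⟩

end Aux

theorem Dset_isConnDomSet_of_even (k n : ℕ) (hk : 1 ≤ k) (hkeven : Even k)
    (hn : 1 ≤ n) (F : Fin n → Finset (Fin k)) (hF : ∀ j, (F j).Nonempty) :
    IsConnDomSet (graphGF k n F) (Dset k n) ∧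
      (Dset k n).ncard = 3 * k + 3 * n + 8 := by
  have hmod : k % 2 = 0 := Nat.even_iff.mp hkeven
  refine ⟨⟨?_, ?_⟩, ?_⟩
  · -- domination
    rintro (⟨i, bv⟩ | (⟨j, cv⟩ | (hv | ⟨av, t⟩)))
    · cases bv with
      | a => exact Or.inl (memA i)
      | e => exact Or.inl (memE i)
      | b => exact Or.inl (memB i)
      | b' => exact Or.inr ⟨_, memB i, gadj F (by simp) (Or.inl ⟨rfl, trivial⟩)⟩
      | h => exact Or.inr ⟨_, memA i, gadj F (by simp) (Or.inl ⟨rfl, trivial⟩)⟩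
      | k => exact Or.inr ⟨_, memA i, gadj F (by simp) (Or.inr ⟨rfl, trivial⟩)⟩
      | f1 => exact Or.inr ⟨_, memE i, gadj F (by simp) (Or.inl ⟨rfl, trivial⟩)⟩
      | f2 => exact Or.inr ⟨_, memE i, gadj F (by simp) (Or.inr ⟨rfl, trivial⟩)⟩
      | g1 => exact Or.inr ⟨_, memE i, gadj F (by simp) (Or.inl ⟨rfl, trivial⟩)⟩
      | g2 => exact Or.inr ⟨_, memE i, gadj F (by simp) (Or.inl ⟨rfl, trivial⟩)⟩
    · cases cv with
      | c => exact Or.inl (memC j)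
      | d => exact Or.inr ⟨_, memC j, gadj F (by simp) (Or.inl ⟨rfl, trivial⟩)⟩
      | dd t => exact Or.inr ⟨_, memC j, gadj F (by simp) (Or.inl ⟨rfl, trivial⟩)⟩
      | cc t =>
        obtain ⟨i, hi⟩ := hF j
        exact Or.inr ⟨_, memA i, gadj F (by simp) (Or.inr ⟨hi, rfl, Or.inr ⟨t, rfl⟩⟩)⟩
    · cases hv with
      | u i =>
        by_cases h : (i : ℕ) ≤ 2 * n + 7
        · exact Or.inl (memU i h)
        · have hi : (i : ℕ) = 2 * n + 8 := by omega
          refine Or.inr ⟨_, memU ⟨2 * n + 7, by omega⟩ (by simp), gadj F ?_ (Or.inl ?_)⟩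
          · intro h'
            simp only [Sum.inr.injEq, Sum.inl.injEq, HVert.u.injEq] at h'
            have := congrArg Fin.val h'
            simp only [Fin.val_mk] at this
            omega
          · exact (by omega : (i : ℕ) = 2 * n + 7 + 1)
      | x t =>
        have ht := t.isLt
        refine Or.inr ⟨_, memU ⟨(t : ℕ) + 1, by omega⟩
          (by show (t : ℕ) + 1 ≤ 2 * n + 7; omega), gadj F (by simp) (Or.inl ?_)⟩
        exact Or.inl rfl
      | y s =>
        have hs := s.isLt
        refine Or.inr ⟨_, memU ⟨(s : ℕ) + 2, by omega⟩
          (by show (s : ℕ) + 2 ≤ 2 * n + 7; omega), gadj F (by simp) (Or.inr ?_)⟩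
        exact rfl
    · exact absurd t.isLt (by omega)
  · -- connectedness
    have h0 : (Sum.inr (Sum.inr (Sum.inl (HVert.u ⟨0, by omega⟩))) : GVert k n) ∈ Dset k n :=
      memU _ (by simp)
    set G := graphGF k n F with hG
    set S := Dset k n with hS
    have iadj : ∀ (a b : S), G.Adj a.1 b.1 → (G.induce S).Adj a b := by
      intro a b h; exact h
    have ukey : ∀ m, m ≤ 2 * n + 7 → ∀ (i : Fin (2 * n + 7 + 2)) (hi : (i : ℕ) = m)
        (hmem : (Sum.inr (Sum.inr (Sum.inl (HVert.u i))) : GVert k n) ∈ S),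
        (G.induce S).Reachable ⟨_, h0⟩ ⟨Sum.inr (Sum.inr (Sum.inl (HVert.u i))), hmem⟩ := by
      intro m
      induction m with
      | zero =>
        intro _ i hi hmem
        have he : (⟨Sum.inr (Sum.inr (Sum.inl (HVert.u ⟨0, by omega⟩))), h0⟩ : S) =
            ⟨Sum.inr (Sum.inr (Sum.inl (HVert.u i))), hmem⟩ := by
          apply Subtype.ext
          simp only [Sum.inr.injEq, Sum.inl.injEq, HVert.u.injEq]
          exact Fin.ext hi.symm
        rw [← he]
      | succ m ih =>
        intro hm i hi hmem
        refine (ih (by omega) ⟨m, by omega⟩ rfl (memU _ (by simp; omega))).trans ?_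
        refine SimpleGraph.Adj.reachable (iadj _ _ (gadj F ?_ (Or.inl ?_)))
        · intro h'
          simp only [Sum.inr.injEq, Sum.inl.injEq, HVert.u.injEq] at h'
          have := congrArg Fin.val h'
          simp only [Fin.val_mk] at this
          omega
        · exact (by omega : (i : ℕ) = m + 1)
    have akey : ∀ i : Fin k, (G.induce S).Reachable ⟨_, h0⟩ ⟨_, memA (n := n) i⟩ := by
      intro i
      refine SimpleGraph.Adj.reachable (iadj _ _ (gadj F (by simp) (Or.inl ?_)))
      exact ⟨rfl, Or.inl rfl⟩
    have key : ∀ v (hv : v ∈ S), (G.induce S).Reachable ⟨_, h0⟩ ⟨v, hv⟩ := by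
      intro v hv
      rcases hv with ((⟨i, hile, rfl⟩ | ⟨i, (rfl | rfl | rfl)⟩) | ⟨j, rfl⟩)
      · exact ukey (i : ℕ) hile i rfl _
      · exact akey i
      · refine (akey i).trans ?_
        exact SimpleGraph.Adj.reachable (iadj _ _ (gadj F (by simp) (Or.inl ⟨rfl, trivial⟩)))
      · refine ((ukey 0 (by omega) ⟨0, by omega⟩ rfl (memU _ (by simp))).trans ?_)
        refine SimpleGraph.Adj.reachable (iadj _ _ (gadj F (by simp) (Or.inl ?_)))
        exact ⟨rfl, Or.inr rfl⟩
      · obtain ⟨i, hi⟩ := hF j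
        refine (akey i).trans ?_
        refine SimpleGraph.Adj.reachable (iadj _ _ (gadj F (by simp) (Or.inr ?_)))
        exact ⟨hi, rfl, Or.inl rfl⟩
    have : Nonempty S := ⟨⟨_, h0⟩⟩
    exact ⟨fun a b => (key a.1 a.2).symm.trans (key b.1 b.2)⟩
  · -- cardinality
    classical
    set f : Fin (2 * n + 8) ⊕ (Fin k × Fin 3) ⊕ Fin n → GVert k n := fun z =>
      match z with
      | .inl j => Sum.inr (Sum.inr (Sum.inl (HVert.u ⟨(j : ℕ), by omega⟩)))
      | .inr (.inl (i, t)) => Sum.inl (i, ![BVert.a, BVert.e, BVert.b] t)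
      | .inr (.inr j) => Sum.inr (Sum.inl (j, CVert.c)) with hf
    have hg : Function.Injective (![BVert.a, BVert.e, BVert.b]) := by
      intro a b h
      fin_cases a <;> fin_cases b <;> simp_all
    have hinj : Function.Injective f := by
      rintro (j₁ | (⟨i₁, t₁⟩ | j₁)) (j₂ | (⟨i₂, t₂⟩ | j₂)) h <;>
        simp only [hf, Sum.inr.injEq, Sum.inl.injEq, Prod.mk.injEq, HVert.u.injEq,
          Fin.mk.injEq, reduceCtorEq] at h
      · obtain rfl := Fin.ext h; rfl
      · obtain ⟨rfl, h2⟩ := h; obtain rfl := hg h2; rfl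
      · obtain ⟨rfl, -⟩ := h; rfl
    have hrange : Set.range f = Dset k n := by
      ext v
      constructor
      · rintro ⟨(j | (⟨i, t⟩ | j)), rfl⟩
        · exact memU _ (by have := j.isLt; show (j : ℕ) ≤ 2 * n + 7; omega)
        · fin_cases t
          · exact memA i
          · exact memE i
          · exact memB i
        · exact memC j
      · rintro ((⟨i, hile, rfl⟩ | ⟨i, (rfl | rfl | rfl)⟩) | ⟨j, rfl⟩)
        · exact ⟨Sum.inl ⟨(i : ℕ), by omega⟩, by simp [hf, Fin.eta]⟩
        · exact ⟨Sum.inr (Sum.inl (i, 0)), rfl⟩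
        · exact ⟨Sum.inr (Sum.inl (i, 1)), rfl⟩
        · exact ⟨Sum.inr (Sum.inl (i, 2)), rfl⟩
        · exact ⟨Sum.inr (Sum.inr j), rfl⟩
    rw [← hrange, ← Set.image_univ, Set.ncard_image_of_injective _ hinj, Set.ncard_univ]
    simp [Nat.card_eq_fintype_card]
    ring

end CDG
end

section
/- Let F be a positive CNF formula with k variables and n ≥ 1 clauses (each clause a nonempty subset of the variables), where k is odd. Then the set D = {u_0, u_1, ..., u_{2n+7}} ∪ ⋃_{i∈[k]} {a_i, e_i, b_i} ∪ {c_1, ..., c_n} ∪ {p_1, p_2, p_3} is a connected dominating set of G_F of size 3k + 3n + 11. -/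
namespace CDG

/-- The set `{p_1, p_2, p_3}` in the copy of `A` inside `G_F` (present when `k` is odd). -/
def Pset (k n : ℕ) : Set (GVert k n) :=
  {v | ∃ t : Fin (k % 2),
    v = .inr (.inr (.inr (.p1, t))) ∨ v = .inr (.inr (.inr (.p2, t))) ∨
    v = .inr (.inr (.inr (.p3, t)))}


section Aux

deriving instance DecidableEq for BVert
deriving instance DecidableEq for AVert

variable {k n : ℕ} {F : Fin n → Finset (Fin k)}

lemma adjGF {x y : GVert k n} (hne : x ≠ y)
    (h : GRel k n F x y ∨ GRel k n F y x) : (graphGF k n F).Adj x y := ⟨hne, h⟩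

lemma ireach {S : Set (GVert k n)} {x y : GVert k n} (hx : x ∈ S) (hy : y ∈ S)
    (h : (graphGF k n F).Adj x y) :
    ((graphGF k n F).induce S).Reachable ⟨x, hx⟩ ⟨y, hy⟩ :=
  SimpleGraph.Adj.reachable h

lemma mem_u (k n : ℕ) (m : ℕ) (hm : m ≤ 2 * n + 7) :
    (Sum.inr (Sum.inr (Sum.inl (HVert.u ⟨m, by omega⟩))) : GVert k n) ∈ Dset k n ∪ Pset k n :=
  Or.inl (Or.inl (Or.inl ⟨⟨m, by omega⟩, hm, rfl⟩))

lemma mem_a (k n : ℕ) (i : Fin k) :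
    (Sum.inl (i, BVert.a) : GVert k n) ∈ Dset k n ∪ Pset k n :=
  Or.inl (Or.inl (Or.inr ⟨i, Or.inl rfl⟩))

lemma mem_e (k n : ℕ) (i : Fin k) :
    (Sum.inl (i, BVert.e) : GVert k n) ∈ Dset k n ∪ Pset k n :=
  Or.inl (Or.inl (Or.inr ⟨i, Or.inr (Or.inl rfl)⟩))

lemma mem_b (k n : ℕ) (i : Fin k) :
    (Sum.inl (i, BVert.b) : GVert k n) ∈ Dset k n ∪ Pset k n :=
  Or.inl (Or.inl (Or.inr ⟨i, Or.inr (Or.inr rfl)⟩))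

lemma mem_c (k n : ℕ) (j : Fin n) :
    (Sum.inr (Sum.inl (j, CVert.c)) : GVert k n) ∈ Dset k n ∪ Pset k n :=
  Or.inl (Or.inr ⟨j, rfl⟩)

lemma mem_p1 (k n : ℕ) (t : Fin (k % 2)) :
    (Sum.inr (Sum.inr (Sum.inr (AVert.p1, t))) : GVert k n) ∈ Dset k n ∪ Pset k n :=
  Or.inr ⟨t, Or.inl rfl⟩

lemma mem_p2 (k n : ℕ) (t : Fin (k % 2)) :
    (Sum.inr (Sum.inr (Sum.inr (AVert.p2, t))) : GVert k n) ∈ Dset k n ∪ Pset k n :=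
  Or.inr ⟨t, Or.inr (Or.inl rfl)⟩

lemma mem_p3 (k n : ℕ) (t : Fin (k % 2)) :
    (Sum.inr (Sum.inr (Sum.inr (AVert.p3, t))) : GVert k n) ∈ Dset k n ∪ Pset k n :=
  Or.inr ⟨t, Or.inr (Or.inr rfl)⟩

lemma reach_u (F : Fin n → Finset (Fin k)) :
    ∀ (m : ℕ) (hm : m ≤ 2 * n + 7),
      ((graphGF k n F).induce (Dset k n ∪ Pset k n)).Reachable
        ⟨.inr (.inr (.inl (.u ⟨0, by omega⟩))), mem_u k n 0 (by omega)⟩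
        ⟨.inr (.inr (.inl (.u ⟨m, by omega⟩))), mem_u k n m hm⟩
  | 0, _ => SimpleGraph.Reachable.refl _
  | m + 1, hm =>
      (reach_u F m (by omega)).trans <| ireach _ _ <| adjGF
        (by intro hcon; simp only [Sum.inr.injEq, Sum.inl.injEq, HVert.u.injEq,
              Fin.mk.injEq] at hcon; omega)
        (Or.inl rfl)

lemma reach_a (F : Fin n → Finset (Fin k)) (i : Fin k) :
    ((graphGF k n F).induce (Dset k n ∪ Pset k n)).Reachable
      ⟨.inr (.inr (.inl (.u ⟨0, by omega⟩))), mem_u k n 0 (by omega)⟩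
      ⟨.inl (i, .a), mem_a k n i⟩ :=
  ireach _ _ <| adjGF (by simp) (Or.inl ⟨rfl, Or.inl rfl⟩)

lemma reach_e (F : Fin n → Finset (Fin k)) (i : Fin k) :
    ((graphGF k n F).induce (Dset k n ∪ Pset k n)).Reachable
      ⟨.inr (.inr (.inl (.u ⟨0, by omega⟩))), mem_u k n 0 (by omega)⟩
      ⟨.inl (i, .e), mem_e k n i⟩ :=
  (reach_a F i).trans <| ireach _ _ <| adjGF (by simp) (Or.inl ⟨rfl, trivial⟩)

lemma reach_b (F : Fin n → Finset (Fin k)) (i : Fin k) :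
    ((graphGF k n F).induce (Dset k n ∪ Pset k n)).Reachable
      ⟨.inr (.inr (.inl (.u ⟨0, by omega⟩))), mem_u k n 0 (by omega)⟩
      ⟨.inl (i, .b), mem_b k n i⟩ :=
  (reach_e F i).trans <| ireach _ _ <| adjGF (by simp) (Or.inl ⟨rfl, trivial⟩)

lemma reach_c (F : Fin n → Finset (Fin k)) (hF : ∀ j, (F j).Nonempty) (j : Fin n) :
    ((graphGF k n F).induce (Dset k n ∪ Pset k n)).Reachable
      ⟨.inr (.inr (.inl (.u ⟨0, by omega⟩))), mem_u k n 0 (by omega)⟩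
      ⟨.inr (.inl (j, .c)), mem_c k n j⟩ := by
  obtain ⟨i, hi⟩ := hF j
  exact (reach_a F i).trans <| ireach _ _ <| adjGF (by simp)
    (Or.inr ⟨hi, rfl, Or.inl rfl⟩)

lemma reach_p1 (F : Fin n → Finset (Fin k)) (t : Fin (k % 2)) :
    ((graphGF k n F).induce (Dset k n ∪ Pset k n)).Reachable
      ⟨.inr (.inr (.inl (.u ⟨0, by omega⟩))), mem_u k n 0 (by omega)⟩
      ⟨.inr (.inr (.inr (.p1, t))), mem_p1 k n t⟩ :=
  ireach _ _ <| adjGF (by simp) (Or.inr ⟨rfl, rfl⟩)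

lemma reach_p2 (F : Fin n → Finset (Fin k)) (t : Fin (k % 2)) :
    ((graphGF k n F).induce (Dset k n ∪ Pset k n)).Reachable
      ⟨.inr (.inr (.inl (.u ⟨0, by omega⟩))), mem_u k n 0 (by omega)⟩
      ⟨.inr (.inr (.inr (.p2, t))), mem_p2 k n t⟩ :=
  (reach_p1 F t).trans <| ireach _ _ <| adjGF (by simp) (Or.inl trivial)

lemma reach_p3 (F : Fin n → Finset (Fin k)) (t : Fin (k % 2)) :
    ((graphGF k n F).induce (Dset k n ∪ Pset k n)).Reachable
      ⟨.inr (.inr (.inl (.u ⟨0, by omega⟩))), mem_u k n 0 (by omega)⟩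
      ⟨.inr (.inr (.inr (.p3, t))), mem_p3 k n t⟩ :=
  (reach_p2 F t).trans <| ireach _ _ <| adjGF (by simp) (Or.inl trivial)

lemma reach_base (F : Fin n → Finset (Fin k)) (hF : ∀ j, (F j).Nonempty)
    (x : ↥(Dset k n ∪ Pset k n)) :
    ((graphGF k n F).induce (Dset k n ∪ Pset k n)).Reachable
      ⟨.inr (.inr (.inl (.u ⟨0, by omega⟩))), mem_u k n 0 (by omega)⟩ x := by
  obtain ⟨v, hv⟩ := x
  have hv' := hv
  simp only [Dset, Pset, Set.mem_union, Set.mem_setOf_eq] at hv'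
  rcases hv' with ((⟨i, hi, h⟩ | ⟨i, h | h | h⟩) | ⟨j, h⟩) | ⟨t, h | h | h⟩ <;> subst h
  · exact reach_u F (i : ℕ) hi
  · exact reach_a F i
  · exact reach_e F i
  · exact reach_b F i
  · exact reach_c F hF j
  · exact reach_p1 F t
  · exact reach_p2 F t
  · exact reach_p3 F t

end Aux

theorem Dset_union_Pset_isConnDomSet_of_odd (k n : ℕ) (hkodd : Odd k)
    (hn : 1 ≤ n) (F : Fin n → Finset (Fin k)) (hF : ∀ j, (F j).Nonempty) :
    IsConnDomSet (graphGF k n F) (Dset k n ∪ Pset k n) ∧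
      (Dset k n ∪ Pset k n).ncard = 3 * k + 3 * n + 11 := by
  have hodd : k % 2 = 1 := Nat.odd_iff.mp hkodd
  constructor
  · constructor
    · -- domination
      rintro (⟨i, bv⟩ | ⟨j, cv⟩ | hv | ⟨av, t⟩)
      · cases bv with
        | a => exact Or.inl (mem_a k n i)
        | e => exact Or.inl (mem_e k n i)
        | b => exact Or.inl (mem_b k n i)
        | b' => exact Or.inr ⟨.inl (i, .b), mem_b k n i,
            adjGF (by simp) (Or.inl ⟨rfl, trivial⟩)⟩
        | h => exact Or.inr ⟨.inl (i, .a), mem_a k n i,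
            adjGF (by simp) (Or.inl ⟨rfl, trivial⟩)⟩
        | k => exact Or.inr ⟨.inl (i, .a), mem_a k n i,
            adjGF (by simp) (Or.inr ⟨rfl, trivial⟩)⟩
        | f1 => exact Or.inr ⟨.inl (i, .e), mem_e k n i,
            adjGF (by simp) (Or.inl ⟨rfl, trivial⟩)⟩
        | f2 => exact Or.inr ⟨.inl (i, .e), mem_e k n i,
            adjGF (by simp) (Or.inr ⟨rfl, trivial⟩)⟩
        | g1 => exact Or.inr ⟨.inl (i, .e), mem_e k n i,
            adjGF (by simp) (Or.inl ⟨rfl, trivial⟩)⟩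
        | g2 => exact Or.inr ⟨.inl (i, .e), mem_e k n i,
            adjGF (by simp) (Or.inl ⟨rfl, trivial⟩)⟩
      · cases cv with
        | c => exact Or.inl (mem_c k n j)
        | d => exact Or.inr ⟨.inr (.inl (j, .c)), mem_c k n j,
            adjGF (by simp) (Or.inl ⟨rfl, trivial⟩)⟩
        | dd t => exact Or.inr ⟨.inr (.inl (j, .c)), mem_c k n j,
            adjGF (by simp) (Or.inl ⟨rfl, trivial⟩)⟩
        | cc t =>
          obtain ⟨i, hi⟩ := hF j
          exact Or.inr ⟨.inl (i, .a), mem_a k n i,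
            adjGF (by simp) (Or.inr ⟨hi, rfl, Or.inr ⟨t, rfl⟩⟩)⟩
      · cases hv with
        | u i =>
          by_cases hi : (i : ℕ) ≤ 2 * n + 7
          · exact Or.inl (Or.inl (Or.inl (Or.inl ⟨i, hi, rfl⟩)))
          · have hiv : (i : ℕ) = 2 * n + 8 := by omega
            refine Or.inr ⟨.inr (.inr (.inl (.u ⟨2 * n + 7, by omega⟩))),
              mem_u k n (2 * n + 7) (by omega),
              adjGF ?_ (Or.inl ?_)⟩
            · intro hcon
              simp only [Sum.inr.injEq, Sum.inl.injEq, HVert.u.injEq, Fin.mk.injEq,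
                Fin.ext_iff] at hcon
              omega
            · show (i : ℕ) = 2 * n + 7 + 1
              omega
        | x t =>
          refine Or.inr ⟨.inr (.inr (.inl (.u ⟨(t : ℕ) + 1, by omega⟩))),
            mem_u k n ((t : ℕ) + 1) (by omega), adjGF (by simp) (Or.inl (Or.inl rfl))⟩
        | y s =>
          refine Or.inr ⟨.inr (.inr (.inl (.u ⟨(s : ℕ) + 2, by omega⟩))),
            mem_u k n ((s : ℕ) + 2) (by omega), adjGF (by simp) (Or.inr rfl)⟩
      · cases av with
        | p1 => exact Or.inl (mem_p1 k n t)
        | p2 => exact Or.inl (mem_p2 k n t)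
        | p3 => exact Or.inl (mem_p3 k n t)
        | q1 => exact Or.inr ⟨.inr (.inr (.inr (.p1, t))), mem_p1 k n t,
            adjGF (by simp) (Or.inl trivial)⟩
        | q2 => exact Or.inr ⟨.inr (.inr (.inr (.p2, t))), mem_p2 k n t,
            adjGF (by simp) (Or.inl trivial)⟩
        | r1 => exact Or.inr ⟨.inr (.inr (.inr (.p2, t))), mem_p2 k n t,
            adjGF (by simp) (Or.inl trivial)⟩
        | r2 => exact Or.inr ⟨.inr (.inr (.inr (.p3, t))), mem_p3 k n t,
            adjGF (by simp) (Or.inl trivial)⟩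
    · -- connectedness
      rw [SimpleGraph.connected_iff]
      refine ⟨fun x y => ?_, ⟨⟨_, mem_u k n 0 (by omega)⟩⟩⟩
      exact (reach_base F hF x).symm.trans (reach_base F hF y)
  · -- cardinality
    set f1 : Fin (2 * n + 8) → GVert k n :=
      fun m => .inr (.inr (.inl (.u ⟨(m : ℕ), by omega⟩))) with hf1
    set f2 : Fin k × Fin 3 → GVert k n :=
      fun p => .inl (p.1, ![BVert.a, BVert.e, BVert.b] p.2) with hf2
    set f3 : Fin n → GVert k n := fun j => .inr (.inl (j, .c)) with hf3
    set fP : Fin (k % 2) × Fin 3 → GVert k n :=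
      fun p => .inr (.inr (.inr (![AVert.p1, AVert.p2, AVert.p3] p.2, p.1))) with hfP
    have hinj1 : Function.Injective f1 := by
      intro a b h
      simp only [hf1, Sum.inr.injEq, Sum.inl.injEq, HVert.u.injEq, Fin.mk.injEq] at h
      exact Fin.ext h
    have hinjB : Function.Injective ![BVert.a, BVert.e, BVert.b] := by decide
    have hinjA : Function.Injective ![AVert.p1, AVert.p2, AVert.p3] := by decide
    have hinj2 : Function.Injective f2 := by
      rintro ⟨a, s⟩ ⟨b, t⟩ h
      simp only [hf2, Sum.inl.injEq, Prod.mk.injEq] at h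
      exact Prod.ext h.1 (hinjB h.2)
    have hinj3 : Function.Injective f3 := by
      rintro a b h
      simp only [hf3, Sum.inr.injEq, Sum.inl.injEq, Prod.mk.injEq] at h
      exact h.1
    have hinjP : Function.Injective fP := by
      rintro ⟨a, s⟩ ⟨b, t⟩ h
      simp only [hfP, Sum.inr.injEq, Prod.mk.injEq] at h
      exact Prod.ext h.2 (hinjA h.1)
    have hD : Dset k n ∪ Pset k n =
        ((Set.range f1 ∪ Set.range f2) ∪ Set.range f3) ∪ Set.range fP := by
      rw [Dset, Pset]
      congr 1
      · congr 1
        · congr 1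
          · ext v
            constructor
            · rintro ⟨i, hi, rfl⟩
              exact ⟨⟨(i : ℕ), by omega⟩, rfl⟩
            · rintro ⟨m, rfl⟩
              exact ⟨⟨(m : ℕ), by omega⟩, by simpa using (by omega : (m : ℕ) ≤ 2 * n + 7), rfl⟩
          · ext v
            constructor
            · rintro ⟨i, h | h | h⟩
              · exact ⟨(i, 0), h.symm⟩
              · exact ⟨(i, 1), h.symm⟩
              · exact ⟨(i, 2), h.symm⟩
            · rintro ⟨⟨i, s⟩, rfl⟩
              fin_cases s
              · exact ⟨i, Or.inl rfl⟩
              · exact ⟨i, Or.inr (Or.inl rfl)⟩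
              · exact ⟨i, Or.inr (Or.inr rfl)⟩
        · ext v
          constructor
          · rintro ⟨j, rfl⟩; exact ⟨j, rfl⟩
          · rintro ⟨j, rfl⟩; exact ⟨j, rfl⟩
      · ext v
        constructor
        · rintro ⟨t, h | h | h⟩
          · exact ⟨(t, 0), h.symm⟩
          · exact ⟨(t, 1), h.symm⟩
          · exact ⟨(t, 2), h.symm⟩
        · rintro ⟨⟨t, s⟩, rfl⟩
          fin_cases s
          · exact ⟨t, Or.inl rfl⟩
          · exact ⟨t, Or.inr (Or.inl rfl)⟩
          · exact ⟨t, Or.inr (Or.inr rfl)⟩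
    have hfin1 : (Set.range f1).Finite := Set.finite_range f1
    have hfin2 : (Set.range f2).Finite := Set.finite_range f2
    have hfin3 : (Set.range f3).Finite := Set.finite_range f3
    have hfinP : (Set.range fP).Finite := Set.finite_range fP
    have hd12 : Disjoint (Set.range f1) (Set.range f2) := by
      rw [Set.disjoint_left]
      rintro v ⟨a, rfl⟩ ⟨b, h⟩
      simp [hf1, hf2] at h
    have hd3 : Disjoint (Set.range f1 ∪ Set.range f2) (Set.range f3) := by
      rw [Set.disjoint_left]
      rintro v (⟨a, rfl⟩ | ⟨a, rfl⟩) ⟨b, h⟩ <;> simp [hf1, hf2, hf3] at h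
    have hdP : Disjoint ((Set.range f1 ∪ Set.range f2) ∪ Set.range f3) (Set.range fP) := by
      rw [Set.disjoint_left]
      rintro v ((⟨a, rfl⟩ | ⟨a, rfl⟩) | ⟨a, rfl⟩) ⟨b, h⟩ <;> simp [hf1, hf2, hf3, hfP] at h
    have hc1 : (Set.range f1).ncard = 2 * n + 8 := by
      rw [← Set.image_univ, Set.ncard_image_of_injective _ hinj1, Set.ncard_univ]
      simp
    have hc2 : (Set.range f2).ncard = 3 * k := by
      rw [← Set.image_univ, Set.ncard_image_of_injective _ hinj2, Set.ncard_univ]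
      simp [Nat.card_eq_fintype_card]
      omega
    have hc3 : (Set.range f3).ncard = n := by
      rw [← Set.image_univ, Set.ncard_image_of_injective _ hinj3, Set.ncard_univ]
      simp
    have hcP : (Set.range fP).ncard = 3 := by
      rw [← Set.image_univ, Set.ncard_image_of_injective _ hinjP, Set.ncard_univ]
      simp [Nat.card_eq_fintype_card, hodd]
    rw [hD, Set.ncard_union_eq hdP ((hfin1.union hfin2).union hfin3) hfinP,
      Set.ncard_union_eq hd3 (hfin1.union hfin2) hfin3,
      Set.ncard_union_eq hd12 hfin1 hfin2, hc1, hc2, hc3, hcP]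
    omega

end CDG
end

section
/- Let F be a positive CNF formula with k ≥ 1 variables and n ≥ 1 clauses (each clause a nonempty subset of the variables). Then every minimum connected dominating set of G_F contains all the vertices u_0, u_1, ..., u_{2n+7} of the copy of H_{2n+7} and all the vertices c_1, ..., c_n. -/
namespace CDG

section Aux

/-- Membership in a set closed under adjacency propagates along walks. -/
lemma walk_closed {V : Type*} {G : SimpleGraph V} {L : Set V}
    (hcl : ∀ a b, G.Adj a b → a ∈ L → b ∈ L) :
    ∀ {v w : V}, G.Walk v w → v ∈ L → w ∈ L := by
  intro v w p
  induction p with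
  | nil => exact id
  | cons h _ ih => exact fun hv => ih (hcl _ _ h hv)

/-- If the subgraph induced on `S` is connected and `L` is closed under adjacency
within `S`, then membership in `L` propagates between any two vertices of `S`. -/
lemma induce_closed {V : Type*} {G : SimpleGraph V} {S : Set V}
    (h : (G.induce S).Connected) {L : Set V}
    (hcl : ∀ a b, a ∈ S → b ∈ S → G.Adj a b → a ∈ L → b ∈ L)
    {v w : V} (hv : v ∈ S) (hw : w ∈ S) (hvL : v ∈ L) : w ∈ L := by
  obtain ⟨p⟩ := h.preconnected ⟨v, hv⟩ ⟨w, hw⟩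
  exact walk_closed (G := G.induce S) (L := {x : S | (x : V) ∈ L})
    (fun a b hab hal => hcl a b a.2 b.2 hab hal) p hvL

/-- A rank function on the vertices of `G_F`. -/
def rho (k n : ℕ) : GVert k n → ℕ
  | .inr (.inr (.inl (.u j))) => 2 * (j : ℕ) + 2
  | .inr (.inr (.inl (.x t))) => 2 * (t : ℕ) + 5
  | .inr (.inr (.inl (.y t))) => 2 * (t : ℕ) + 5
  | _ => 0

lemma grel_rho {k n : ℕ} {F : Fin n → Finset (Fin k)} (i : ℕ)
    {a b : GVert k n} (h : GRel k n F a b)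
    (ha : ∀ j : Fin (2 * n + 7 + 2),
      a = Sum.inr (Sum.inr (Sum.inl (HVert.u j))) → (j : ℕ) ≠ i)
    (hb : ∀ j : Fin (2 * n + 7 + 2),
      b = Sum.inr (Sum.inr (Sum.inl (HVert.u j))) → (j : ℕ) ≠ i) :
    (rho k n a < 2 * i + 2 ↔ rho k n b < 2 * i + 2) := by
  rcases a with ⟨i1, v⟩ | ⟨j1, v⟩ | v | ⟨v, z1⟩ <;>
    rcases b with ⟨i2, w⟩ | ⟨j2, w⟩ | w | ⟨w, z2⟩
  · exact Iff.rfl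
  · exact h.elim
  · exact h.elim
  · exact h.elim
  · exact Iff.rfl
  · exact Iff.rfl
  · exact h.elim
  · exact h.elim
  · -- H → B
    obtain ⟨rfl, -⟩ := h
    have := ha _ rfl
    simp only [rho] at *
    omega
  · exact h.elim
  · -- H, H
    cases v with
    | u j1 =>
      cases w with
      | u j2 =>
        have h1 := ha j1 rfl
        have h2 := hb j2 rfl
        simp only [GRel, HRel] at h
        simp only [rho]
        omega
      | x t2 =>
        have h1 := ha j1 rfl
        simp only [GRel, HRel] at h
        simp only [rho]
        omega
      | y s2 => exact h.elim
    | x t1 =>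
      cases w with
      | u j2 => exact h.elim
      | x t2 => exact h.elim
      | y s2 =>
        simp only [GRel, HRel] at h
        subst h
        exact Iff.rfl
    | y s1 =>
      cases w with
      | u j2 =>
        have h2 := hb j2 rfl
        simp only [GRel, HRel] at h
        simp only [rho]
        omega
      | x t2 => exact h.elim
      | y s2 => exact h.elim
  · exact h.elim
  · exact h.elim
  · exact h.elim
  · -- A → H
    obtain ⟨-, rfl⟩ := h
    have := hb _ rfl
    simp only [rho] at *
    omega
  · exact Iff.rfl

lemma nbr_bp {k n : ℕ} {F : Fin n → Finset (Fin k)} (i0 : Fin k) (u : GVert k n)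
    (h : GRel k n F u (Sum.inl (i0, BVert.b')) ∨
      GRel k n F (Sum.inl (i0, BVert.b')) u) :
    ∃ i1 w, u = Sum.inl (i1, w) := by
  rcases u with ⟨i1, v⟩ | ⟨j1, v⟩ | v | ⟨v, z⟩
  · exact ⟨i1, v, rfl⟩
  · rcases h with h | h
    · exact absurd h.2.1 (by simp)
    · exact h.elim
  · rcases h with h | h
    · rcases h.2 with h2 | h2 <;> exact absurd h2 (by simp)
    · exact h.elim
  · rcases h with h | h <;> exact h.elim

lemma nbr_ulast {k n : ℕ} {F : Fin n → Finset (Fin k)} (u : GVert k n)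
    (h : GRel k n F u
        (Sum.inr (Sum.inr (Sum.inl (HVert.u (⟨2 * n + 8, by omega⟩ : Fin (2 * n + 7 + 2)))))) ∨
      GRel k n F
        (Sum.inr (Sum.inr (Sum.inl (HVert.u (⟨2 * n + 8, by omega⟩ : Fin (2 * n + 7 + 2)))))) u) :
    2 * (2 * n + 7) + 2 ≤ rho k n u := by
  rcases u with ⟨i1, v⟩ | ⟨j1, v⟩ | v | ⟨v, z⟩
  · rcases h with h | h
    · exact h.elim
    · have := h.1
      simp only [HVert.u.injEq, Fin.mk.injEq] at this
      omega
  · rcases h with h | h <;> exact h.elim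
  · cases v with
    | u j =>
      have hj := j.isLt
      rcases h with h | h
      · simp only [GRel, HRel] at h
        simp only [rho]
        omega
      · simp only [GRel, HRel] at h
        omega
    | x t =>
      have ht := t.isLt
      rcases h with h | h
      · exact h.elim
      · simp only [GRel, HRel] at h
        omega
    | y s =>
      have hs := s.isLt
      rcases h with h | h
      · simp only [GRel, HRel] at h
        omega
      · exact h.elim
  · rcases h with h | h
    · have := h.2
      simp only [HVert.u.injEq, Fin.mk.injEq] at this
      omega
    · exact h.elim

lemma nbr_d {k n : ℕ} {F : Fin n → Finset (Fin k)} (j : Fin n) (u : GVert k n)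
    (h : GRel k n F u (Sum.inr (Sum.inl (j, CVert.d))) ∨
      GRel k n F (Sum.inr (Sum.inl (j, CVert.d))) u) :
    u = Sum.inr (Sum.inl (j, CVert.c)) := by
  rcases u with ⟨i1, v⟩ | ⟨j1, v⟩ | v | ⟨v, z⟩
  · rcases h with h | h
    · exact h.elim
    · rcases h.2.2 with h2 | ⟨t, h2⟩ <;> exact absurd h2 (by simp)
  · rcases h with h | h
    · obtain ⟨rfl, h2⟩ := h
      cases v with
      | c => rfl
      | d => exact h2.elim
      | cc t => exact h2.elim
      | dd t => exact h2.elim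
    · obtain ⟨rfl, h2⟩ := h
      cases v <;> exact h2.elim
  · rcases h with h | h <;> exact h.elim
  · rcases h with h | h <;> exact h.elim

end Aux

theorem min_connDomSet_contains_u_and_c (k n : ℕ) (hk : 1 ≤ k) (hn : 1 ≤ n)
    (F : Fin n → Finset (Fin k)) (hF : ∀ j, (F j).Nonempty)
    (S : Set (GVert k n)) (hS : IsConnDomSet (graphGF k n F) S)
    (hmin : S.ncard = connDomNum (graphGF k n F)) :
    (∀ i : Fin (2 * n + 7 + 2), (i : ℕ) ≤ 2 * n + 7 →
      (Sum.inr (Sum.inr (Sum.inl (HVert.u i))) : GVert k n) ∈ S) ∧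
    (∀ j : Fin n, (Sum.inr (Sum.inl (j, CVert.c)) : GVert k n) ∈ S) := by
  obtain ⟨hdom, hconn⟩ := hS
  -- a left witness: a vertex of `S` inside some copy of `B`
  have hv₀ : ∃ v ∈ S, ∃ i1 w, v = Sum.inl (i1, w) := by
    rcases hdom (Sum.inl (⟨0, hk⟩, BVert.b')) with hmem | ⟨u, huS, hadj⟩
    · exact ⟨_, hmem, _, _, rfl⟩
    · rw [graphGF, SimpleGraph.fromRel_adj] at hadj
      exact ⟨u, huS, nbr_bp _ u hadj.2⟩
  -- a right witness: a vertex of `S` of large rank (dominating `u_{2n+8}`)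
  have hw₀ : ∃ w ∈ S, 2 * (2 * n + 7) + 2 ≤ rho k n w := by
    rcases hdom (Sum.inr (Sum.inr (Sum.inl
        (HVert.u (⟨2 * n + 8, by omega⟩ : Fin (2 * n + 7 + 2)))))) with hmem | ⟨u, huS, hadj⟩
    · refine ⟨_, hmem, ?_⟩
      simp only [rho]
      omega
    · rw [graphGF, SimpleGraph.fromRel_adj] at hadj
      exact ⟨u, huS, nbr_ulast u hadj.2⟩
  -- every `u_i` with `i ≤ 2n+7` is in `S`
  have hcut : ∀ i : ℕ, (hi : i ≤ 2 * n + 7) →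
      (Sum.inr (Sum.inr (Sum.inl (HVert.u (⟨i, by omega⟩ : Fin (2 * n + 7 + 2))))) :
        GVert k n) ∈ S := by
    intro i hi
    by_contra hu
    obtain ⟨v₀, hv₀S, i1, vb, rfl⟩ := hv₀
    obtain ⟨w₀, hw₀S, hw₀⟩ := hw₀
    have key : w₀ ∈ {x : GVert k n | rho k n x < 2 * i + 2} := by
      refine induce_closed hconn ?_ hv₀S hw₀S ?_
      · intro a b haS hbS hab hal
        rw [graphGF, SimpleGraph.fromRel_adj] at hab
        have ha' : ∀ jj : Fin (2 * n + 7 + 2),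
            a = Sum.inr (Sum.inr (Sum.inl (HVert.u jj))) → (jj : ℕ) ≠ i := by
          rintro jj rfl hji
          exact hu (by
            have : (⟨i, by omega⟩ : Fin (2 * n + 7 + 2)) = jj := Fin.ext hji.symm
            rw [this]; exact haS)
        have hb' : ∀ jj : Fin (2 * n + 7 + 2),
            b = Sum.inr (Sum.inr (Sum.inl (HVert.u jj))) → (jj : ℕ) ≠ i := by
          rintro jj rfl hji
          exact hu (by
            have : (⟨i, by omega⟩ : Fin (2 * n + 7 + 2)) = jj := Fin.ext hji.symm
            rw [this]; exact hbS)
        rcases hab.2 with hr | hr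
        · exact (grel_rho i hr ha' hb').mp hal
        · exact ((grel_rho i hr hb' ha').symm).mp hal
      · show rho k n (Sum.inl (i1, vb)) < 2 * i + 2
        simp only [rho]
        omega
    have : rho k n w₀ < 2 * i + 2 := key
    omega
  constructor
  · intro i hi
    have h := hcut (i : ℕ) hi
    have he : (⟨(i : ℕ), by omega⟩ : Fin (2 * n + 7 + 2)) = i := rfl
    rwa [he] at h
  · intro j
    by_contra hc
    rcases hdom (Sum.inr (Sum.inl (j, CVert.d))) with hd | ⟨u, huS, hadj⟩
    · -- `d_j ∈ S` but `c_j ∉ S`: `d_j` is isolated in the induced graph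
      obtain ⟨v₀, hv₀S, i1, vb, rfl⟩ := hv₀
      have key : (Sum.inl (i1, vb) : GVert k n) ∈
          {x : GVert k n | x = Sum.inr (Sum.inl (j, CVert.d))} := by
        refine induce_closed hconn ?_ hd hv₀S rfl
        rintro a b haS hbS hab rfl
        rw [graphGF, SimpleGraph.fromRel_adj] at hab
        have hb := nbr_d j b hab.2.symm
        rw [hb] at hbS
        exact (hc hbS).elim
      exact absurd key (by simp)
    · rw [graphGF, SimpleGraph.fromRel_adj] at hadj
      have := nbr_d j u hadj.2
      rw [this] at huS
      exact hc huS

end CDG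
end

section
/- Let F be a positive CNF formula with k ≥ 1 variables and n ≥ 1 clauses (each clause a nonempty subset of the variables). Then every connected dominating set of G_F contains the vertex c_j for each j ∈ [n]. -/
namespace CDG

theorem connDomSet_contains_c (k n : ℕ) (hk : 1 ≤ k) (hn : 1 ≤ n)
    (F : Fin n → Finset (Fin k)) (hF : ∀ j, (F j).Nonempty)
    (S : Set (GVert k n)) (hS : IsConnDomSet (graphGF k n F) S) (j : Fin n) :
    (Sum.inr (Sum.inl (j, CVert.c)) : GVert k n) ∈ S := by
  classical
  by_contra hc
  -- the only neighbor of d_j is c_j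
  have hnbr : ∀ x : GVert k n, (graphGF k n F).Adj (Sum.inr (Sum.inl (j, CVert.d))) x →
      x = Sum.inr (Sum.inl (j, CVert.c)) := by
    intro x hx
    rw [graphGF, SimpleGraph.fromRel_adj] at hx
    obtain ⟨hne, h | h⟩ := hx <;>
      rcases x with ⟨i, v⟩ | ⟨⟨j', w⟩ | v | ⟨v, t⟩⟩ <;>
      simp only [GRel] at h <;>
      first
        | exact h.elim
        | (obtain ⟨h1, h2⟩ := h; cases w <;> simp_all [CRel])
        | simp_all
  -- d_j ∈ S (by domination, since c_j ∉ S)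
  have hdS : (Sum.inr (Sum.inl (j, CVert.d)) : GVert k n) ∈ S := by
    rcases hS.1 (Sum.inr (Sum.inl (j, CVert.d))) with h | ⟨u, hu, hadj⟩
    · exact h
    · have := hnbr u hadj.symm
      subst this; exact absurd hu hc
  -- u_0 must be dominated by something other than d_j
  set u0 : GVert k n := Sum.inr (Sum.inr (Sum.inl (HVert.u ⟨0, by omega⟩))) with hu0
  have hw : ∃ w ∈ S, w ≠ (Sum.inr (Sum.inl (j, CVert.d)) : GVert k n) := by
    rcases hS.1 u0 with h | ⟨u, hu, hadj⟩
    · exact ⟨u0, h, by simp [hu0]⟩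
    · refine ⟨u, hu, ?_⟩
      intro he
      subst he
      have := hnbr u0 hadj
      simp [hu0] at this
  obtain ⟨w, hwS, hwne⟩ := hw
  -- connectivity: a walk from d_j must leave through c_j
  have hreach := hS.2.preconnected ⟨_, hdS⟩ ⟨w, hwS⟩
  obtain ⟨p⟩ := hreach
  cases p with
  | nil => exact hwne rfl
  | cons hadj q =>
    rename_i v
    have hv : (v : GVert k n) = Sum.inr (Sum.inl (j, CVert.c)) := hnbr _ hadj
    exact hc (hv ▸ v.2)

end CDG
end
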